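/- arXiv:2301.13442 — 6 statements merged into one kernel-verified Lean document; each statement's English description precedes it below -/
import Mathlib

section
/- Let α_N, α_E, β, N_c, E_c > 0 and suppose I(N,E) is defined implicitly by I^{-β} = (N_c/N)^{α_N} + (E_c/E)^{α_E} for N, E > 0. Writing C = N·E and viewing I as a function of N and C, the value of N minimizing I(N,C)^{-β} for fixed C > 0 satisfies α_N·(N_c/N)^{α_N} = α_E·(E_c·N/C)^{α_E}. -/
/-- For fixed compute `C`, the value of `N` minimizing
`I(N,C)^{-β} = (N_c/N)^{α_N} + (E_c·N/C)^{α_E}` satisfies the frontier equation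
`α_N·(N_c/N)^{α_N} = α_E·(E_c·N/C)^{α_E}`. -/
theorem stmt0 (αN αE β Nc Ec C N : ℝ)
    (hαN : 0 < αN) (hαE : 0 < αE) (hβ : 0 < β) (hNc : 0 < Nc) (hEc : 0 < Ec)
    (hC : 0 < C) (hN : 0 < N)
    (hmin : ∀ N' : ℝ, 0 < N' →
      (Nc / N) ^ αN + (Ec * N / C) ^ αE ≤ (Nc / N') ^ αN + (Ec * N' / C) ^ αE) :
    αN * (Nc / N) ^ αN = αE * (Ec * N / C) ^ αE := by
  set f : ℝ → ℝ := fun x => (Nc / x) ^ αN + (Ec * x / C) ^ αE with hf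
  set g : ℝ → ℝ := fun x => Nc ^ αN * x ^ (-αN) + (Ec / C) ^ αE * x ^ αE with hg
  have hEC : 0 < Ec / C := div_pos hEc hC
  have heq : ∀ x : ℝ, 0 < x → f x = g x := by
    intro x hx
    have h1 : (Nc / x) ^ αN = Nc ^ αN * x ^ (-αN) := by
      rw [Real.div_rpow hNc.le hx.le, Real.rpow_neg hx.le, div_eq_mul_inv]
    have h2 : (Ec * x / C) ^ αE = (Ec / C) ^ αE * x ^ αE := by
      rw [show Ec * x / C = (Ec / C) * x by ring, Real.mul_rpow hEC.le hx.le]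
    simp [hf, hg, h1, h2]
  have hgderiv : HasDerivAt g
      (Nc ^ αN * (-αN * N ^ (-αN - 1)) + (Ec / C) ^ αE * (αE * N ^ (αE - 1))) N := by
    exact ((Real.hasDerivAt_rpow_const (Or.inl hN.ne')).const_mul (Nc ^ αN)).add
      ((Real.hasDerivAt_rpow_const (Or.inl hN.ne')).const_mul ((Ec / C) ^ αE))
  have hev : f =ᶠ[nhds N] g := by
    filter_upwards [eventually_gt_nhds hN] with x hx using heq x hx
  have hfderiv : HasDerivAt f
      (Nc ^ αN * (-αN * N ^ (-αN - 1)) + (Ec / C) ^ αE * (αE * N ^ (αE - 1))) N :=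
    hgderiv.congr_of_eventuallyEq hev
  have hlocmin : IsLocalMin f N := by
    filter_upwards [eventually_gt_nhds hN] with x hx using hmin x hx
  have hzero := hlocmin.hasDerivAt_eq_zero hfderiv
  have h1 : (Nc / N) ^ αN = Nc ^ αN * N ^ (-αN) := by
    rw [Real.div_rpow hNc.le hN.le, Real.rpow_neg hN.le, div_eq_mul_inv]
  have h2 : (Ec * N / C) ^ αE = (Ec / C) ^ αE * N ^ αE := by
    rw [show Ec * N / C = (Ec / C) * N by ring, Real.mul_rpow hEC.le hN.le]
  have hpm : N ^ (-αN - 1) = N ^ (-αN) / N := by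
    rw [show -αN - 1 = -αN + (-1 : ℝ) by ring, Real.rpow_add hN, Real.rpow_neg_one,
      div_eq_mul_inv]
  have hpe : N ^ (αE - 1) = N ^ αE / N := by
    rw [show αE - 1 = αE + (-1 : ℝ) by ring, Real.rpow_add hN, Real.rpow_neg_one,
      div_eq_mul_inv]
  rw [h1, h2]
  rw [hpm, hpe] at hzero
  have hkey : (αE * ((Ec / C) ^ αE * N ^ αE) - αN * (Nc ^ αN * N ^ (-αN))) / N = 0 := by
    rw [← hzero]; ring
  rcases div_eq_zero_iff.mp hkey with h | h
  · linarith
  · exact absurd h hN.ne'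
end

section
/- Suppose α_N, α_E, β, N_c, E_c > 0, and suppose that for all N, E > 0 satisfying the frontier equation α_N·(N_c/N)^{α_N} = α_E·(E_c/E)^{α_E}, we also have (N_c/N)^{α_N} + (E_c/E)^{α_E} = (N·E)^{-β}. Then 1/β = 1/α_N + 1/α_E. -/
/-- If the power law `(N_c/N)^{α_N} + (E_c/E)^{α_E} = (N·E)^{-β}` holds
along the frontier `α_N·(N_c/N)^{α_N} = α_E·(E_c/E)^{α_E}`, then `1/β = 1/α_N + 1/α_E`. -/
theorem stmt1 (αN αE β Nc Ec : ℝ)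
    (hαN : 0 < αN) (hαE : 0 < αE) (hβ : 0 < β) (hNc : 0 < Nc) (hEc : 0 < Ec)
    (hfr : ∀ N E : ℝ, 0 < N → 0 < E →
      αN * (Nc / N) ^ αN = αE * (Ec / E) ^ αE →
      (Nc / N) ^ αN + (Ec / E) ^ αE = (N * E) ^ (-β)) :
    1 / β = 1 / αN + 1 / αE := by
  set r : ℝ := αN / αE with hrdef
  have hr : 0 < r := div_pos hαN hαE
  set A : ℝ := Nc * Ec * r ^ (-(1 / αE)) with hAdef
  have hA : 0 < A := by positivity
  set b : ℝ := 1 / αN + 1 / αE with hbdef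
  have key : ∀ s : ℝ, 0 < s → s * (1 + r) = A ^ (-β) * s ^ (b * β) := by
    intro s hs
    have hN : (0:ℝ) < Nc * s ^ (-(1 / αN)) := by positivity
    have hE : (0:ℝ) < Ec * (r * s) ^ (-(1 / αE)) := by positivity
    have hx : (Nc / (Nc * s ^ (-(1 / αN)))) ^ αN = s := by
      rw [div_mul_eq_div_div, div_self hNc.ne', one_div,
        ← Real.rpow_neg hs.le, neg_neg, ← Real.rpow_mul hs.le,
        one_div, inv_mul_cancel₀ hαN.ne', Real.rpow_one]
    have hrs : 0 < r * s := mul_pos hr hs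
    have hy : (Ec / (Ec * (r * s) ^ (-(1 / αE)))) ^ αE = r * s := by
      rw [div_mul_eq_div_div, div_self hEc.ne', one_div,
        ← Real.rpow_neg hrs.le, neg_neg, ← Real.rpow_mul hrs.le,
        one_div, inv_mul_cancel₀ hαE.ne', Real.rpow_one]
    have hfront : αN * (Nc / (Nc * s ^ (-(1 / αN)))) ^ αN
        = αE * (Ec / (Ec * (r * s) ^ (-(1 / αE)))) ^ αE := by
      rw [hx, hy, hrdef]
      field_simp
    have h := hfr _ _ hN hE hfront
    rw [hx, hy] at h
    have hprod : (Nc * s ^ (-(1 / αN))) * (Ec * (r * s) ^ (-(1 / αE)))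
        = A * s ^ (-b) := by
      rw [Real.mul_rpow hr.le hs.le, hAdef, hbdef]
      rw [show -(1/αN + 1/αE) = -(1/αN) + -(1/αE) by ring,
        Real.rpow_add hs]
      ring
    rw [hprod, Real.mul_rpow hA.le (by positivity), ← Real.rpow_mul hs.le] at h
    rw [show -b * -β = b * β by ring] at h
    linarith [h]
  have h1 := key 1 one_pos
  have h2 := key 2 two_pos
  rw [Real.one_rpow, mul_one, one_mul] at h1
  rw [← h1] at h2
  have h1r : (0:ℝ) < 1 + r := by linarith
  have h2' : (2:ℝ) = 2 ^ (b * β) := by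
    have := mul_right_cancel₀ h1r.ne' (by linarith [h2] : 2 * (1 + r) = 2 ^ (b*β) * (1+r))
    exact this
  have hlog : Real.log 2 = (b * β) * Real.log 2 := by
    nth_rewrite 1 [h2']
    rw [Real.log_rpow two_pos]
  have hlog2 : Real.log 2 ≠ 0 := (Real.log_pos one_lt_two).ne'
  have hbβ : b * β = 1 := by
    have : (1:ℝ) * Real.log 2 = (b * β) * Real.log 2 := by linarith
    exact (mul_right_cancel₀ hlog2 this).symm
  rw [div_eq_iff hβ.ne']
  exact hbβ.symm
end

section
/- Suppose α_N, α_E, N_c, E_c > 0, β satisfies 1/β = 1/α_N + 1/α_E, and for all N, E > 0 satisfying α_N·(N_c/N)^{α_N} = α_E·(E_c/E)^{α_E} we have (N_c/N)^{α_N} + (E_c/E)^{α_E} = (N·E)^{-β}. Then 1/(N_c·E_c) = (1 + α_N/α_E)^{1/α_N} · (1 + α_E/α_N)^{1/α_E}. -/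
/-- Under the hypotheses of Lemma 1 with `1/β = 1/α_N + 1/α_E`,
the product `N_c·E_c` is determined:
`1/(N_c·E_c) = (1 + α_N/α_E)^{1/α_N} · (1 + α_E/α_N)^{1/α_E}`. -/
theorem stmt2 (αN αE β Nc Ec : ℝ)
    (hαN : 0 < αN) (hαE : 0 < αE) (hNc : 0 < Nc) (hEc : 0 < Ec)
    (hβ : 1 / β = 1 / αN + 1 / αE)
    (hfr : ∀ N E : ℝ, 0 < N → 0 < E →
      αN * (Nc / N) ^ αN = αE * (Ec / E) ^ αE →
      (Nc / N) ^ αN + (Ec / E) ^ αE = (N * E) ^ (-β)) :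
    1 / (Nc * Ec) = (1 + αN / αE) ^ (1 / αN) * (1 + αE / αN) ^ (1 / αE) := by
  have hsum : 0 < 1 / αN + 1 / αE := by positivity
  have hβpos : 0 < β := by
    rcases lt_trichotomy β 0 with h | h | h
    · have h1 : 1 / β < 0 := div_neg_of_pos_of_neg one_pos h
      linarith [hβ ▸ h1]
    · exfalso; rw [h] at hβ; simp at hβ
      have : (0:ℝ) < αN⁻¹ + αE⁻¹ := by positivity
      linarith
    · exact h
  set a := αN ^ (1 / αN) with ha
  set b := αE ^ (1 / αE) with hb
  have hapos : 0 < a := Real.rpow_pos_of_pos hαN _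
  have hbpos : 0 < b := Real.rpow_pos_of_pos hαE _
  have key : ∀ α : ℝ, 0 < α → ((α ^ (1/α) : ℝ))⁻¹ ^ α = 1 / α := by
    intro α hα
    rw [← Real.rpow_neg hα.le, ← Real.rpow_mul hα.le,
      show (-(1/α)) * α = -1 by field_simp, Real.rpow_neg_one, one_div]
  have hN : 0 < Nc * a := by positivity
  have hE : 0 < Ec * b := by positivity
  have e1 : (Nc / (Nc * a)) ^ (αN : ℝ) = 1 / αN := by
    rw [show Nc / (Nc * a) = a⁻¹ by field_simp]
    exact key αN hαN
  have e2 : (Ec / (Ec * b)) ^ (αE : ℝ) = 1 / αE := by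
    rw [show Ec / (Ec * b) = b⁻¹ by field_simp]
    exact key αE hαE
  have hmain := hfr (Nc * a) (Ec * b) hN hE (by rw [e1, e2]; field_simp)
  rw [e1, e2, ← hβ] at hmain
  have hNE : 0 < Nc * a * (Ec * b) := by positivity
  have hβinv : (0:ℝ) < 1 / β := by positivity
  have ht : (0:ℝ) < (1 / β) ^ (1 / β) := Real.rpow_pos_of_pos hβinv _
  have hprod : Nc * a * (Ec * b) = ((1 / β) ^ (1 / β))⁻¹ := by
    have h2 := congrArg (fun x : ℝ => x ^ (-(1/β))) hmain
    rw [← Real.rpow_mul hNE.le, show (-β) * (-(1/β)) = 1 by field_simp,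
      Real.rpow_one, Real.rpow_neg hβinv.le] at h2
    exact h2.symm
  have hfinal : 1 / (Nc * Ec) = a * b * (1 / β) ^ (1 / β) := by
    rw [inv_eq_one_div, eq_div_iff ht.ne'] at hprod
    field_simp
    linear_combination -hprod
  rw [hfinal, show 1 + αN / αE = (αN + αE) / αE by field_simp; try ring,
    show 1 + αE / αN = (αN + αE) / αN by field_simp; try ring, hβ]
  have hs : (0:ℝ) < αN + αE := by linarith
  nth_rw 1 [show 1/αN + 1/αE = (αN + αE) / (αN * αE) by field_simp; try ring]
  rw [Real.div_rpow hs.le (by positivity : (0:ℝ) ≤ αN * αE),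
    Real.div_rpow hs.le hαE.le, Real.div_rpow hs.le hαN.le,
    Real.rpow_add hs, Real.rpow_add (by positivity : (0:ℝ) < αN * αE),
    Real.mul_rpow hαN.le hαE.le, Real.mul_rpow hαN.le hαE.le, ha, hb]
  have p1 : (0:ℝ) < αN ^ (1/αN) := Real.rpow_pos_of_pos hαN _
  have p2 : (0:ℝ) < αN ^ (1/αE) := Real.rpow_pos_of_pos hαN _
  have p3 : (0:ℝ) < αE ^ (1/αN) := Real.rpow_pos_of_pos hαE _
  have p4 : (0:ℝ) < αE ^ (1/αE) := Real.rpow_pos_of_pos hαE _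
  field_simp
end

section
/- Let α_N, α_E, N_c, E_c > 0 with 1/(N_c·E_c) = (1 + α_N/α_E)^{1/α_N}·(1 + α_E/α_N)^{1/α_E}, and let N, E > 0 satisfy α_N·(N_c/N)^{α_N} = α_E·(E_c/E)^{α_E}. Then, with C = N·E, we have N = N_c·(1 + α_N/α_E)^{1/α_N} · C^{1/(1 + α_N/α_E)}. -/
/-- Along the compute-efficient frontier, the optimal model size is a power
law in the compute budget `C = N·E`:
`N = N_c·(1 + α_N/α_E)^{1/α_N} · C^{1/(1 + α_N/α_E)}`. -/
theorem stmt3 (αN αE Nc Ec N E : ℝ)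
    (hαN : 0 < αN) (hαE : 0 < αE) (hNc : 0 < Nc) (hEc : 0 < Ec)
    (hconst : 1 / (Nc * Ec) = (1 + αN / αE) ^ (1 / αN) * (1 + αE / αN) ^ (1 / αE))
    (hN : 0 < N) (hE : 0 < E)
    (hfr : αN * (Nc / N) ^ αN = αE * (Ec / E) ^ αE) :
    N = Nc * (1 + αN / αE) ^ (1 / αN) * (N * E) ^ (1 / (1 + αN / αE)) := by
  have hA : (0:ℝ) < 1 + αN / αE := by positivity
  have hB : (0:ℝ) < 1 + αE / αN := by positivity
  have hsum : (0:ℝ) < αN + αE := by positivity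
  have e1 : Real.log αN + αN * (Real.log Nc - Real.log N)
      = Real.log αE + αE * (Real.log Ec - Real.log E) := by
    have h := congrArg Real.log hfr
    rw [Real.log_mul hαN.ne' (by positivity), Real.log_mul hαE.ne' (by positivity),
      Real.log_rpow (by positivity), Real.log_rpow (by positivity),
      Real.log_div hNc.ne' hN.ne', Real.log_div hEc.ne' hE.ne'] at h
    linarith
  have LA : Real.log (1 + αN / αE) = Real.log (αN + αE) - Real.log αE := by
    rw [show 1 + αN / αE = (αN + αE) / αE by field_simp; ring,
      Real.log_div hsum.ne' hαE.ne']
  have LB : Real.log (1 + αE / αN) = Real.log (αN + αE) - Real.log αN := by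
    rw [show 1 + αE / αN = (αN + αE) / αN by field_simp,
      Real.log_div hsum.ne' hαN.ne']
  have e2 : -(Real.log Nc + Real.log Ec)
      = (1/αN) * (Real.log (αN + αE) - Real.log αE)
        + (1/αE) * (Real.log (αN + αE) - Real.log αN) := by
    have h := congrArg Real.log hconst
    rw [Real.log_div one_ne_zero (by positivity), Real.log_one,
      Real.log_mul hNc.ne' hEc.ne',
      Real.log_mul (by positivity) (by positivity),
      Real.log_rpow hA, Real.log_rpow hB, LA, LB] at h
    linarith
  have hRpos : 0 < Nc * (1 + αN / αE) ^ (1 / αN) * (N * E) ^ (1 / (1 + αN / αE)) := by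
    positivity
  have hlog : Real.log N
      = Real.log (Nc * (1 + αN / αE) ^ (1 / αN) * (N * E) ^ (1 / (1 + αN / αE))) := by
    rw [Real.log_mul (by positivity) (by positivity),
      Real.log_mul hNc.ne' (by positivity),
      Real.log_rpow hA, Real.log_rpow (by positivity),
      Real.log_mul hN.ne' hE.ne', LA]
    have hp : 1 / (1 + αN / αE) = αE / (αN + αE) := by
      rw [div_eq_div_iff hA.ne' hsum.ne']; field_simp; ring
    rw [hp]
    field_simp at e2 ⊢
    linear_combination (-αN) * e1 + e2
  calc N = Real.exp (Real.log N) := (Real.exp_log hN).symm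
    _ = _ := by rw [hlog, Real.exp_log hRpos]
end

section
/- Let α_N, α_E, β, N_c, E_c > 0 with 1/β = 1/α_N + 1/α_E and 1/(N_c·E_c) = (1 + α_N/α_E)^{1/α_N}·(1 + α_E/α_N)^{1/α_E}. For every C > 0, there exist N, E > 0 with N·E = C such that (N_c/N)^{α_N} + (E_c/E)^{α_E} = C^{−β}, and this (N,E) is the unique minimizer of (N,E) ↦ (N_c/N)^{α_N} + (E_c/E)^{α_E} subject to N·E = C. -/
set_option maxHeartbeats 1000000 in
/-- Under the constraints of Lemma 1, for every compute budget `C > 0`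
there is a unique compute-efficient allocation `(N,E)` with `N·E = C`, and it achieves
`(N_c/N)^{α_N} + (E_c/E)^{α_E} = C^{−β}`. -/
theorem stmt12 (αN αE β Nc Ec : ℝ)
    (hαN : 0 < αN) (hαE : 0 < αE) (hNc : 0 < Nc) (hEc : 0 < Ec)
    (hβ : 1 / β = 1 / αN + 1 / αE)
    (hconst : 1 / (Nc * Ec) = (1 + αN / αE) ^ (1 / αN) * (1 + αE / αN) ^ (1 / αE)) :
    ∀ C : ℝ, 0 < C → ∃ N E : ℝ, 0 < N ∧ 0 < E ∧ N * E = C ∧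
      (Nc / N) ^ αN + (Ec / E) ^ αE = C ^ (-β) ∧
      ∀ N' E' : ℝ, 0 < N' → 0 < E' → N' * E' = C → (N', E') ≠ (N, E) →
        (Nc / N) ^ αN + (Ec / E) ^ αE < (Nc / N') ^ αN + (Ec / E') ^ αE := by
  have hβ0 : 0 < β := by
    have h : 0 < 1 / β := by rw [hβ]; positivity
    exact one_div_pos.mp h
  intro C hC
  set A : ℝ := 1 + αN / αE with hAdef
  set B : ℝ := 1 + αE / αN with hBdef
  have hApos : 0 < A := by positivity
  have hBpos : 0 < B := by positivity
  -- key scalar identities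
  have hw1 : A⁻¹ = β / αN := by
    rw [hAdef]
    have hβne : β ≠ 0 := ne_of_gt hβ0
    field_simp at hβ ⊢
    nlinarith [hβ]
  have hw2 : B⁻¹ = β / αE := by
    rw [hBdef]
    have hβne : β ≠ 0 := ne_of_gt hβ0
    field_simp at hβ ⊢
    nlinarith [hβ]
  have hsum : A⁻¹ + B⁻¹ = 1 := by
    rw [hw1, hw2]
    have : β * (1 / αN + 1 / αE) = β * (1 / β) := by rw [← hβ]
    field_simp at this ⊢
    linarith
  set N : ℝ := Nc * A ^ (1 / αN) * C ^ (β / αN) with hNdef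
  set E : ℝ := Ec * B ^ (1 / αE) * C ^ (β / αE) with hEdef
  have hN : 0 < N := by positivity
  have hE : 0 < E := by positivity
  have hNE : N * E = C := by
    have h1 : N * E = (Nc * Ec) * (A ^ (1 / αN) * B ^ (1 / αE)) *
        (C ^ (β / αN) * C ^ (β / αE)) := by rw [hNdef, hEdef]; ring
    have h2 : A ^ (1 / αN) * B ^ (1 / αE) = 1 / (Nc * Ec) := hconst.symm
    have h3 : C ^ (β / αN) * C ^ (β / αE) = C := by
      rw [← Real.rpow_add hC]
      have : β / αN + β / αE = 1 := by
        rw [div_add_div _ _ (ne_of_gt hαN) (ne_of_gt hαE)]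
        have h4 : A⁻¹ + B⁻¹ = β / αN + β / αE := by rw [hw1, hw2]
        rw [div_add_div _ _ (ne_of_gt hαN) (ne_of_gt hαE)] at h4
        linarith [hsum, h4.symm]
      rw [this, Real.rpow_one]
    rw [h1, h2, h3]
    field_simp
  -- values of the two terms at the optimum
  have hxN : (Nc / N) ^ αN = A⁻¹ * C ^ (-β) := by
    have h1 : Nc / N = A ^ (-(1 / αN)) * C ^ (-(β / αN)) := by
      rw [hNdef, Real.rpow_neg hApos.le, Real.rpow_neg hC.le]
      field_simp
    rw [h1, Real.mul_rpow (by positivity) (by positivity),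
      ← Real.rpow_mul hApos.le, ← Real.rpow_mul hC.le]
    have e1 : -(1 / αN) * αN = -1 := by field_simp
    have e2 : -(β / αN) * αN = -β := by field_simp
    rw [e1, e2, Real.rpow_neg_one]
  have hxE : (Ec / E) ^ αE = B⁻¹ * C ^ (-β) := by
    have h1 : Ec / E = B ^ (-(1 / αE)) * C ^ (-(β / αE)) := by
      rw [hEdef, Real.rpow_neg hBpos.le, Real.rpow_neg hC.le]
      field_simp
    rw [h1, Real.mul_rpow (by positivity) (by positivity),
      ← Real.rpow_mul hBpos.le, ← Real.rpow_mul hC.le]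
    have e1 : -(1 / αE) * αE = -1 := by field_simp
    have e2 : -(β / αE) * αE = -β := by field_simp
    rw [e1, e2, Real.rpow_neg_one]
  have hval : (Nc / N) ^ αN + (Ec / E) ^ αE = C ^ (-β) := by
    rw [hxN, hxE, ← add_mul, hsum, one_mul]
  refine ⟨N, E, hN, hE, hNE, hval, ?_⟩
  intro N' E' hN' hE' hNE' hne
  set r : ℝ := N' / N with hrdef
  have hr : 0 < r := by positivity
  have hE'eq : E' = E / r := by
    have h1 : E' * N' = E * N := by
      rw [mul_comm E' N', hNE', mul_comm E N, hNE]
    rw [hrdef, div_div_eq_mul_div, eq_div_iff (ne_of_gt hN')]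
    linarith
  have hrne : r ≠ 1 := by
    intro h
    apply hne
    have hN'eq : N' = N := by
      have h2 : N' / N = 1 := by rw [← hrdef, h]
      exact (div_eq_one_iff_eq (ne_of_gt hN)).mp h2
    have : E' = E := by rw [hE'eq, h, div_one]
    simp [hN'eq, this]
  -- rewrite the perturbed terms
  have htermN : (Nc / N') ^ αN = (Nc / N) ^ αN * r ^ (-αN) := by
    have h1 : Nc / N' = (Nc / N) * r⁻¹ := by
      rw [hrdef]; field_simp
    rw [h1, Real.mul_rpow (by positivity) (by positivity),
      Real.inv_rpow hr.le, ← Real.rpow_neg hr.le]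
  have htermE : (Ec / E') ^ αE = (Ec / E) ^ αE * r ^ αE := by
    have h1 : Ec / E' = (Ec / E) * r := by
      rw [hE'eq]; field_simp
    rw [h1, Real.mul_rpow (by positivity) hr.le]
  rw [htermN, htermE]
  -- strict convexity argument via exp
  set s : ℝ := Real.log r with hsdef
  have hs : s ≠ 0 := by
    rw [hsdef]
    simp only [ne_eq, Real.log_eq_zero]
    push_neg
    exact ⟨ne_of_gt hr, hrne, by linarith⟩
  have hrN : r ^ (-αN) = Real.exp (s * (-αN)) := by
    rw [Real.rpow_def_of_pos hr]
  have hrE : r ^ αE = Real.exp (s * αE) := by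
    rw [Real.rpow_def_of_pos hr]
  have h1 : s * (-αN) + 1 < Real.exp (s * (-αN)) :=
    Real.add_one_lt_exp (by simp [hs, ne_of_gt hαN])
  have h2 : s * αE + 1 < Real.exp (s * αE) :=
    Real.add_one_lt_exp (mul_ne_zero hs (ne_of_gt hαE))
  have hxpos : 0 < (Nc / N) ^ αN := by positivity
  have hypos : 0 < (Ec / E) ^ αE := by positivity
  have hbal : (Nc / N) ^ αN * αN = (Ec / E) ^ αE * αE := by
    rw [hxN, hxE, hw1, hw2]
    field_simp
  rw [hrN, hrE]
  have hb2 : s * ((Nc / N) ^ αN * αN) = s * ((Ec / E) ^ αE * αE) := by rw [hbal]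
  nlinarith [mul_lt_mul_of_pos_left h1 hxpos, mul_lt_mul_of_pos_left h2 hypos, hb2]
end

section
/- Let α_N, α_E, N_c, E_c, N_e > 0 with 1/(N_c·E_c) = (1 + α_N/α_E)^{1/α_N}·(1 + α_E/α_N)^{1/α_E}, and suppose N, E > 0 satisfy the cost-efficient frontier equation (1 + N_e/N)·α_N·(N_c/N)^{α_N} = α_E·(E_c/E)^{α_E} together with (N_c/N)^{α_N} + (E_c/E)^{α_E} = (N·E)^{−β} where 1/β = 1/α_N + 1/α_E. Then the total cost C = (N + N_e)·E satisfies C = (1 + N_e/N)·(1/(1 + (α_N/α_E)(1 + N_e/N)))^{1/α_N + 1/α_E}·(N/N_c)^{1 + α_N/α_E}. -/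
/-- Along the cost-efficient frontier with environment cost `N_e`, the
total cost `C = (N + N_e)·E` satisfies
`C = (1 + N_e/N)·(1/(1 + (α_N/α_E)(1 + N_e/N)))^{1/α_N + 1/α_E}·(N/N_c)^{1 + α_N/α_E}`. -/
theorem stmt14 (αN αE β Nc Ec Ne N E : ℝ)
    (hαN : 0 < αN) (hαE : 0 < αE) (hNc : 0 < Nc) (hEc : 0 < Ec) (hNe : 0 < Ne)
    (hN : 0 < N) (hE : 0 < E)
    (hβ : 1 / β = 1 / αN + 1 / αE)
    (hconst : 1 / (Nc * Ec) = (1 + αN / αE) ^ (1 / αN) * (1 + αE / αN) ^ (1 / αE))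
    (hfr : (1 + Ne / N) * (αN * (Nc / N) ^ αN) = αE * (Ec / E) ^ αE)
    (hpow : (Nc / N) ^ αN + (Ec / E) ^ αE = (N * E) ^ (-β)) :
    (N + Ne) * E =
      (1 + Ne / N) * (1 / (1 + (αN / αE) * (1 + Ne / N))) ^ (1 / αN + 1 / αE)
        * (N / Nc) ^ (1 + αN / αE) := by
  have hβpos : 0 < β := by
    have h : 0 < 1 / β := by rw [hβ]; positivity
    exact one_div_pos.mp h
  set S : ℝ := 1 + (αN / αE) * (1 + Ne / N) with hSdef
  have hSpos : 0 < S := by positivity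
  have hxpos : 0 < (Nc / N) ^ αN := Real.rpow_pos_of_pos (by positivity) _
  have hNEpos : 0 < N * E := by positivity
  have hy : (Ec / E) ^ αE = (αN / αE) * ((1 + Ne / N) * (Nc / N) ^ αN) := by
    have h0 : αE * (Ec / E) ^ αE
        = αE * ((αN / αE) * ((1 + Ne / N) * (Nc / N) ^ αN)) := by
      rw [← hfr]; field_simp
    exact mul_left_cancel₀ hαE.ne' h0
  have hProd : (N * E) ^ (-β) = (Nc / N) ^ αN * S := by
    rw [← hpow, hy, hSdef]; ring
  have hNE : N * E = ((Nc / N) ^ αN) ^ (-(1 / β)) * S ^ (-(1 / β)) := by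
    have h1 : ((N * E) ^ (-β)) ^ (-(1 / β)) = N * E := by
      rw [← Real.rpow_mul hNEpos.le]
      have : -β * -(1 / β) = 1 := by field_simp
      rw [this, Real.rpow_one]
    rw [← h1, hProd, Real.mul_rpow hxpos.le hSpos.le]
  have hx' : ((Nc / N) ^ αN) ^ (-(1 / β)) = (N / Nc) ^ (1 + αN / αE) := by
    rw [← Real.rpow_mul (by positivity : (0:ℝ) ≤ Nc / N)]
    have : αN * -(1 / β) = -(1 + αN / αE) := by
      rw [hβ]; field_simp
    rw [this, Real.rpow_neg (by positivity), ← Real.inv_rpow (by positivity)]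
    congr 1
    field_simp
  have hS' : S ^ (-(1 / β)) = (1 / S) ^ (1 / αN + 1 / αE) := by
    rw [Real.rpow_neg hSpos.le, ← Real.inv_rpow hSpos.le, hβ, ← one_div]
  have hNN : (N + Ne) * E = (1 + Ne / N) * (N * E) := by
    field_simp
  rw [hNN, hNE, hx', hS']
  ring
end
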